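/- arXiv:2006.02325 — 3 statements merged into one kernel-verified Lean document; each statement's English description precedes it below -/
import Mathlib

section
/- Let n ≥ 2 and 0 ≤ l < k-1 with k ≤ n. Let A and B be real symmetric n×n matrices such that A is positive semidefinite, B ∈ Γ_{k-1}, and A + B ∈ Γ_{k-1}. Then (σ_{k-1}(A+B)/σ_l(A+B))^{1/(k-1-l)} ≥ (σ_{k-1}(B)/σ_l(B))^{1/(k-1-l)}. -/
/-- The `j`-th elementary symmetric polynomial of `lam : Fin n → ℝ`:
`σ_j(λ) = ∑_{1 ≤ i₁ < ⋯ < i_j ≤ n} λ_{i₁} ⋯ λ_{i_j}`, with `σ_0(λ) = 1`. -/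
noncomputable def esymmVec (n j : ℕ) (lam : Fin n → ℝ) : ℝ :=
  ∑ S ∈ Finset.univ.powersetCard j, ∏ i ∈ S, lam i

/-- Membership in the Gårding cone `Γ_m = {λ : σ_j(λ) > 0 for all 1 ≤ j ≤ m}`. -/
def inGamma (n m : ℕ) (lam : Fin n → ℝ) : Prop :=
  ∀ j : ℕ, 1 ≤ j → j ≤ m → 0 < esymmVec n j lam

/-!
Write `B = U diag(λ) Uᴴ` and `N = Uᴴ A U ⪰ 0`. Expanding `det (X - diag(λ) - N)` along the rows
taken from `N` gives, with `λ_S` the entries of `λ` indexed by `S`,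
`σ_j(A + B) = ∑_{|S| ≤ j} det N_S · σ_{j-|S|}(λ_{Sᶜ})`, where every `det N_S ≥ 0`.
The inequality `σ_l(A+B) σ_m(B) ≤ σ_m(A+B) σ_l(B)`, `m = k - 1`, is then proved term by term.
For `|S| ≤ l` the terms compare by `σ_{l-|S|}(λ_{Sᶜ}) σ_m(λ) ≤ σ_{m-|S|}(λ_{Sᶜ}) σ_l(λ)` on `Γ_m`,
obtained by deleting the entries of `λ_S` one at a time, using that `σ_{p+1}/σ_p` decreases
on `Γ_q` for `p ≤ q` (Newton's inequalities); the terms with `l < |S| ≤ m` are nonnegative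
since deleting `|S|` entries maps `Γ_m` into `Γ_{m-|S|}`.
-/

open Polynomial

theorem Nat.choose_mul_choose_add_two_le_sq (M j : ℕ) :
    M.choose j * M.choose (j + 2) ≤ M.choose (j + 1) ^ 2 := by
  have h₁ := Nat.choose_succ_right_eq M j
  have h₂ := Nat.choose_succ_right_eq M (j + 1)
  have hle : (j + 1) * (M - (j + 1)) ≤ (j + 2) * (M - j) :=
    Nat.mul_le_mul (by omega) (by omega)
  refine Nat.le_of_mul_le_mul_right (c := (j + 1) * (j + 2)) ?_ (by positivity)
  calc M.choose j * M.choose (j + 2) * ((j + 1) * (j + 2))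
      = M.choose j * (j + 1) * (M.choose (j + 1 + 1) * (j + 1 + 1)) := by ring
    _ = M.choose j * M.choose (j + 1) * ((j + 1) * (M - (j + 1))) := by rw [h₂]; ring
    _ ≤ M.choose j * M.choose (j + 1) * ((j + 2) * (M - j)) := by gcongr
    _ = M.choose (j + 1) * (j + 2) * (M.choose j * (M - j)) := by ring
    _ = M.choose (j + 1) ^ 2 * ((j + 1) * (j + 2)) := by rw [← h₁]; ring

namespace Multiset

section CommSemiring

variable {R : Type*} [CommSemiring R]

theorem esymm_cons_succ (a : R) (s : Multiset R) (j : ℕ) :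
    (a ::ₘ s).esymm (j + 1) = s.esymm (j + 1) + a * s.esymm j := by
  simp [esymm, powersetCard_cons, ← sum_map_mul_left]

theorem esymm_zero (s : Multiset R) : s.esymm 0 = 1 := by simp [esymm]

theorem esymm_card (s : Multiset R) : s.esymm (card s) = s.prod := by simp [esymm]

theorem esymm_eq_zero_of_card_lt {s : Multiset R} {j : ℕ} (h : card s < j) : s.esymm j = 0 := by
  simp [esymm, powersetCard_eq_empty _ h]

end CommSemiring

noncomputable def esymmMean (s : Multiset ℝ) (k : ℕ) : ℝ :=
  s.esymm k / (card s).choose k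

/-- By Rolle's theorem the derivative of `∏ a ∈ s, (X - a)` has `card s - 1` real roots;
`t` is the multiset of these roots. -/
theorem exists_card_eq_pred_esymm_eq (s : Multiset ℝ) :
    ∃ t : Multiset ℝ, card t = card s - 1 ∧
      ∀ r < card s, (card s : ℝ) * t.esymm r = (card s - r : ℕ) * s.esymm r := by
  rcases Nat.eq_zero_or_pos (card s) with hs | hs
  · exact ⟨0, by simp [hs], fun r hr => by omega⟩
  set p := (s.map (X - C ·)).prod
  obtain ⟨m, hm⟩ : ∃ m, card s = m + 1 := ⟨card s - 1, by omega⟩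
  have hcoeff : ∀ i, i ≤ m + 1 → p.coeff i = (-1) ^ (m + 1 - i) * s.esymm (m + 1 - i) := by
    intro i hi
    rw [prod_X_sub_C_coeff s (by omega), hm]
  have hlead : p.derivative.coeff m = m + 1 := by
    rw [coeff_derivative, hcoeff _ le_rfl]; simp [esymm_zero]
  have hdeg : p.derivative.natDegree = m := by
    refine le_antisymm ?_ (le_natDegree_of_ne_zero (by rw [hlead]; positivity))
    have := natDegree_derivative_le p
    rw [natDegree_multiset_prod_X_sub_C_eq_card, hm] at this
    omega
  have hroots : card p.derivative.roots = p.derivative.natDegree := by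
    refine le_antisymm (card_roots' _) ?_
    have := card_roots_le_derivative p
    rw [roots_multiset_prod_X_sub_C, hm] at this
    omega
  refine ⟨p.derivative.roots, by rw [hroots, hdeg, hm]; rfl, fun r hr => ?_⟩
  have h := coeff_eq_esymm_roots_of_card hroots (k := m - r) (by omega)
  rw [coeff_derivative, hcoeff _ (by omega), leadingCoeff, hdeg, hlead,
    show m - (m - r) = r by omega, show m + 1 - (m - r + 1) = r by omega] at h
  rw [hm, show m + 1 - r = m - r + 1 by omega]
  push_cast
  refine mul_left_cancel₀ (pow_ne_zero r (neg_ne_zero.mpr one_ne_zero)) ?_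
  linear_combination -h

theorem exists_card_eq_esymmMean_eq (s : Multiset ℝ) {d : ℕ} (hd : d ≤ card s) :
    ∃ t : Multiset ℝ, card t = d ∧ ∀ r ≤ d, t.esymmMean r = s.esymmMean r := by
  obtain ⟨k, hk⟩ := Nat.exists_eq_add_of_le hd
  induction k generalizing s with
  | zero => exact ⟨s, by omega, fun _ _ => rfl⟩
  | succ k ih =>
    obtain ⟨t₁, hcard, ht₁⟩ := exists_card_eq_pred_esymm_eq s
    obtain ⟨t, rfl, ht⟩ := ih t₁ (by omega) (by omega)
    refine ⟨t, rfl, fun r hr => ?_⟩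
    obtain ⟨m, hm⟩ : ∃ m, card s = m + 1 := ⟨card s - 1, by omega⟩
    have hchoose :
        ((m.choose r : ℕ) : ℝ) * (m + 1) = ((m + 1).choose r : ℕ) * (m + 1 - r : ℕ) := by
      exact_mod_cast Nat.choose_mul_succ_eq m r
    have hdiff := ht₁ r (by omega)
    rw [hm] at hdiff
    rw [ht r hr, esymmMean, esymmMean, hcard, hm, Nat.add_sub_cancel,
      div_eq_div_iff (by positivity [Nat.choose_pos (show r ≤ m by omega)])
        (by positivity [Nat.choose_pos (show r ≤ m + 1 by omega)])]
    refine mul_right_cancel₀ (show ((m : ℝ) + 1) ≠ 0 by positivity) ?_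
    push_cast at hdiff
    linear_combination ((m + 1).choose r : ℝ) * hdiff - s.esymm r * hchoose

theorem esymm_map_inv_mul_prod {K : Type*} [Field K] (s : Multiset K) (h0 : (0 : K) ∉ s)
    {r q : ℕ} (h : r + q = card s) : (s.map (·⁻¹)).esymm r * s.prod = s.esymm q := by
  induction s using Multiset.induction_on generalizing r q with
  | empty =>
    obtain ⟨rfl, rfl⟩ : r = 0 ∧ q = 0 := by simpa using h
    simp [esymm_zero]
  | cons a t ih =>
    have ha : a ≠ 0 := fun ha => h0 (ha ▸ mem_cons_self a t)
    have ht : (0 : K) ∉ t := fun h => h0 (mem_cons_of_mem h)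
    rw [card_cons] at h
    rw [map_cons, prod_cons]
    rcases r with _ | r
    · rw [esymm_zero, one_mul, show q = card (a ::ₘ t) by simp; omega, esymm_card, prod_cons]
    rcases q with _ | q
    · have hr := ih ht (show r + 0 = card t by omega)
      rw [esymm_zero] at hr
      rw [esymm_zero, esymm_cons_succ, esymm_eq_zero_of_card_lt (by simp; omega), zero_add,
        mul_mul_mul_comm, inv_mul_cancel₀ ha, one_mul, hr]
    · rw [esymm_cons_succ, esymm_cons_succ, ← ih ht (show r + 1 + q = card t by omega),
        ← ih ht (show r + (q + 1) = card t by omega)]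
      field_simp
      ring

theorem esymmMean_map_inv_mul_prod (s : Multiset ℝ) (h0 : (0 : ℝ) ∉ s) {r : ℕ}
    (hr : r ≤ card s) : (s.map (·⁻¹)).esymmMean r * s.prod = s.esymmMean (card s - r) := by
  rw [esymmMean, esymmMean, card_map, Nat.choose_symm hr, div_mul_eq_mul_div,
    esymm_map_inv_mul_prod s h0 (q := card s - r) (by omega)]

theorem esymmMean_zero_mul_esymmMean_two_le (s : Multiset ℝ) (hs : 2 ≤ card s) :
    s.esymmMean 0 * s.esymmMean 2 ≤ s.esymmMean 1 ^ 2 := by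
  obtain ⟨t, ht, hts⟩ := exists_card_eq_esymmMean_eq s hs
  obtain ⟨x, y, rfl⟩ := card_eq_two.mp ht
  rw [← hts 0 (by omega), ← hts 1 (by omega), ← hts 2 le_rfl]
  simp [esymmMean, esymm_zero]
  nlinarith [sq_nonneg (x - y)]

/-- Newton's inequality. Differentiating reduces it to `card s = j + 2`, inverting the entries
then to `j = 0`, and differentiating again to AM-GM for two numbers. -/
theorem esymmMean_mul_esymmMean_le_sq (s : Multiset ℝ) {j : ℕ} (hj : j + 2 ≤ card s) :
    s.esymmMean j * s.esymmMean (j + 2) ≤ s.esymmMean (j + 1) ^ 2 := by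
  obtain ⟨t, ht, hts⟩ := exists_card_eq_esymmMean_eq s hj
  rw [← hts j (by omega), ← hts (j + 1) (by omega), ← hts (j + 2) le_rfl]
  by_cases hp : t.prod = 0
  · rw [show t.esymmMean (j + 2) = 0 by rw [esymmMean, ← ht, esymm_card, hp, zero_div], mul_zero]
    positivity
  have h0 : (0 : ℝ) ∉ t := fun h => hp (prod_eq_zero h)
  have hmean : ∀ r ≤ 2, t.esymmMean (j + 2 - r) = (t.map (·⁻¹)).esymmMean r * t.prod :=
    fun r hr => by rw [esymmMean_map_inv_mul_prod t h0 (by omega), ht]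
  have hinv := esymmMean_zero_mul_esymmMean_two_le (t.map (·⁻¹)) (by simp; omega)
  have e₀ : t.esymmMean (j + 2) = _ := hmean 0 (by omega)
  have e₁ : t.esymmMean (j + 1) = _ := hmean 1 (by omega)
  have e₂ : t.esymmMean j = _ := hmean 2 (by omega)
  rw [e₀, e₁, e₂]
  linear_combination mul_le_mul_of_nonneg_left hinv (sq_nonneg t.prod)

theorem esymm_mul_esymm_le_sq (s : Multiset ℝ) (j : ℕ) :
    s.esymm j * s.esymm (j + 2) ≤ s.esymm (j + 1) ^ 2 := by
  by_cases hj : j + 2 ≤ card s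
  swap
  · rw [esymm_eq_zero_of_card_lt (j := j + 2) (by omega), mul_zero]
    positivity
  have hpos : ∀ i ≤ card s, (0 : ℝ) < (card s).choose i :=
    fun i hi => by exact_mod_cast Nat.choose_pos hi
  have hc :
      ((card s).choose j * (card s).choose (j + 2) : ℝ) ≤ (card s).choose (j + 1) ^ 2 := by
    exact_mod_cast Nat.choose_mul_choose_add_two_le_sq _ _
  have hN := esymmMean_mul_esymmMean_le_sq s hj
  rw [esymmMean, esymmMean, esymmMean, div_mul_div_comm, div_pow,
    div_le_div_iff₀ (mul_pos (hpos j (by omega)) (hpos (j + 2) hj))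
      (pow_pos (hpos (j + 1) (by omega)) 2)] at hN
  exact le_of_mul_le_mul_right (hN.trans (mul_le_mul_of_nonneg_left hc (sq_nonneg _)))
    (pow_pos (hpos (j + 1) (by omega)) 2)

def InGardingCone (s : Multiset ℝ) (m : ℕ) : Prop :=
  ∀ j ≤ m, 0 < s.esymm j

namespace InGardingCone

variable {s t : Multiset ℝ} {a : ℝ} {m p q : ℕ}

theorem mono (h : s.InGardingCone m) {k : ℕ} (hk : k ≤ m) : s.InGardingCone k :=
  fun j hj => h j (hj.trans hk)

theorem esymm_mul_esymm_succ_le (h : s.InGardingCone q) (hpq : p ≤ q) :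
    s.esymm p * s.esymm (q + 1) ≤ s.esymm q * s.esymm (p + 1) := by
  induction q with
  | zero => rw [Nat.le_zero.mp hpq, mul_comm]
  | succ q ih =>
    rcases hpq.eq_or_lt with rfl | hpq
    · rw [mul_comm]
    have hq := h q (by omega)
    have hprev := ih (h.mono (by omega)) (by omega)
    refine le_of_mul_le_mul_left ?_ hq
    calc s.esymm q * (s.esymm p * s.esymm (q + 2))
        = s.esymm p * (s.esymm q * s.esymm (q + 2)) := by ring
      _ ≤ s.esymm p * s.esymm (q + 1) ^ 2 :=
        mul_le_mul_of_nonneg_left (esymm_mul_esymm_le_sq s q) (h p (by omega)).le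
      _ = s.esymm (q + 1) * (s.esymm p * s.esymm (q + 1)) := by ring
      _ ≤ s.esymm (q + 1) * (s.esymm q * s.esymm (p + 1)) :=
        mul_le_mul_of_nonneg_left hprev (h (q + 1) le_rfl).le
      _ = s.esymm q * (s.esymm (q + 1) * s.esymm (p + 1)) := by ring

theorem of_cons (h : (a ::ₘ s).InGardingCone (m + 1)) : s.InGardingCone m := by
  induction m with
  | zero => intro j hj; simp [Nat.le_zero.mp hj, esymm_zero]
  | succ m ih =>
    have hs := ih (h.mono (by omega))
    intro j hj
    rcases (show j ≤ m ∨ j = m + 1 by omega) with hj | rfl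
    · exact hs j hj
    have h₁ := h (m + 1) (by omega)
    have h₂ := h (m + 2) le_rfl
    rw [esymm_cons_succ] at h₁ h₂
    have hm := hs m le_rfl
    have hnewton := esymm_mul_esymm_le_sq s m
    -- if `σ_{m+1}(s) ≤ 0`, then `a > 0` and `σ_{m+2}(s) > 0`, against Newton's inequality
    by_contra! hneg
    have ha : 0 < a := by nlinarith
    nlinarith [mul_le_mul_of_nonneg_left hnewton ha.le]

theorem of_add (h : (s + t).InGardingCone (m + card t)) : s.InGardingCone m := by
  induction t using Multiset.induction_on generalizing m with
  | empty => simpa using h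
  | cons c t ih =>
    rw [add_cons, card_cons, ← add_assoc] at h
    exact ih h.of_cons

theorem esymm_mul_esymm_add_le (h : (s + t).InGardingCone (q + card t)) (hpq : p ≤ q) :
    s.esymm p * (s + t).esymm (q + card t) ≤ s.esymm q * (s + t).esymm (p + card t) := by
  induction t using Multiset.induction_on generalizing s p q with
  | empty => simpa using (mul_comm _ _).le
  | cons c t ih =>
    rw [add_cons, ← cons_add, card_cons, ← add_assoc, add_right_comm] at h
    rw [add_cons, ← cons_add, card_cons, ← add_assoc, ← add_assoc, add_right_comm q,
      add_right_comm p]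
    have hcs : (c ::ₘ s).InGardingCone (q + 1) := h.of_add
    have hs : s.InGardingCone q := hcs.of_cons
    have hstep :
        s.esymm p * (c ::ₘ s).esymm (q + 1) ≤ s.esymm q * (c ::ₘ s).esymm (p + 1) := by
      rw [esymm_cons_succ, esymm_cons_succ]
      linarith [hs.esymm_mul_esymm_succ_le hpq]
    have hY := h (p + 1 + card t) (by omega)
    refine le_of_mul_le_mul_left ?_ (hcs (p + 1) (by omega))
    linarith [mul_le_mul_of_nonneg_left (ih (p := p + 1) h (by omega)) (hs p hpq).le,
      mul_le_mul_of_nonneg_right hstep hY.le]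

end InGardingCone

end Multiset

namespace Matrix

variable {ι R : Type*} [Fintype ι] [DecidableEq ι] [CommRing R]

theorem det_add_diagonal (N : Matrix ι ι R) (v : ι → R) :
    (N + diagonal v).det =
      ∑ S : Finset ι, (∏ i ∈ Sᶜ, v i) * (N.submatrix ((↑) : S → ι) (↑)).det := by
  change detRowAlternating (fun i => N i + diagonal v i) = _
  rw [show (fun i => N i + diagonal v i) = N.row + (diagonal v).row from rfl,
    AlternatingMap.map_add_univ]
  refine Finset.sum_congr rfl fun S _ => ?_
  have hrows : S.piecewise N.row (diagonal v).row
      = Sᶜ.piecewise (fun i => v i • S.piecewise N.row (1 : Matrix ι ι R).row i)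
          (S.piecewise N.row (1 : Matrix ι ι R).row) := by
    funext i j
    by_cases hi : i ∈ S <;> simp [Finset.piecewise, hi, diagonal_apply, one_apply]
  rw [hrows, ← AlternatingMap.coe_multilinearMap, MultilinearMap.map_piecewise_smul, smul_eq_mul]
  exact congrArg _ (det_piecewise_one_eq_submatrix_det N S)

open Finset in
theorem charpoly_diagonal_add_coeff (v : ι → R) (N : Matrix ι ι R) {j : ℕ}
    (hj : j ≤ Fintype.card ι) :
    (diagonal v + N).charpoly.coeff (Fintype.card ι - j) = (-1) ^ j *
      ∑ S ∈ univ.filter (#· ≤ j),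
        (N.submatrix ((↑) : S → ι) (↑)).det * (Sᶜ.val.map v).esymm (j - #S) := by
  nontriviality R
  have hchar : charmatrix (diagonal v + N) = -N.map C + diagonal fun i => X - C (v i) := by
    refine Matrix.ext fun i k => ?_
    by_cases hik : i = k
    · subst hik; simp; ring
    · simp [hik]
  rw [charpoly, hchar, det_add_diagonal, finsetSum_coeff, sum_filter, mul_sum]
  refine sum_congr rfl fun S _ => ?_
  have hcard : Multiset.card (Sᶜ.val.map v) = Fintype.card ι - #S := by simp [card_compl]
  have hprod : ∏ i ∈ Sᶜ, (X - C (v i)) = ((Sᶜ.val.map v).map (X - C ·)).prod := by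
    rw [prod_eq_multiset_prod, Multiset.map_map]; rfl
  have hminor : ((-(N.map C)).submatrix ((↑) : S → ι) (↑)).det
      = C ((-1) ^ #S * (N.submatrix ((↑) : S → ι) (↑)).det) := by
    change (-((N.map C).submatrix Subtype.val Subtype.val) : Matrix S S R[X]).det = _
    rw [det_neg, submatrix_map, ← RingHom.mapMatrix_apply, ← RingHom.map_det,
      Fintype.card_coe, map_mul, map_pow, map_neg, map_one]
  rw [hminor, hprod, coeff_mul_C]
  split_ifs with hS
  · rw [Multiset.prod_X_sub_C_coeff _ (by omega), hcard,
      show Fintype.card ι - #S - (Fintype.card ι - j) = j - #S by omega]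
    have hsign : (-1 : R) ^ #S * (-1) ^ (j - #S) = (-1) ^ j := by
      rw [← pow_add, Nat.add_sub_cancel' hS]
    linear_combination
      ((N.submatrix ((↑) : S → ι) (↑)).det * (Sᶜ.val.map v).esymm (j - #S)) * hsign
  · rw [coeff_eq_zero_of_natDegree_lt, zero_mul, mul_zero]
    rw [natDegree_multiset_prod_X_sub_C_eq_card, hcard]
    have := S.card_le_univ
    omega

end Matrix

namespace Matrix.IsHermitian

open Finset

variable {ι : Type*} [Fintype ι] [DecidableEq ι] {A B M : Matrix ι ι ℝ}

theorem charpoly_coeff_eq_esymm_eigenvalues (hM : M.IsHermitian) {j : ℕ}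
    (hj : j ≤ Fintype.card ι) :
    M.charpoly.coeff (Fintype.card ι - j) = (-1) ^ j * (univ.val.map hM.eigenvalues).esymm j := by
  have hprod : M.charpoly = ((univ.val.map hM.eigenvalues).map (X - C ·)).prod := by
    rw [hM.charpoly_eq, prod_eq_multiset_prod, Multiset.map_map]; rfl
  rw [hprod, Multiset.prod_X_sub_C_coeff _ (by simp)]
  simp only [Multiset.card_map, card_val, card_univ, Nat.sub_sub_self hj]

theorem charpoly_add_eq (hB : B.IsHermitian) (A : Matrix ι ι ℝ) :
    (A + B).charpoly = (diagonal hB.eigenvalues +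
      star (hB.eigenvectorUnitary : Matrix ι ι ℝ) * A * hB.eigenvectorUnitary).charpoly := by
  set U : Matrix ι ι ℝ := ↑hB.eigenvectorUnitary
  have hU : U * star U = 1 := Unitary.mul_star_self_of_mem hB.eigenvectorUnitary.prop
  have hB' : B = U * diagonal hB.eigenvalues * star U := by
    conv_lhs => rw [hB.spectral_theorem, Unitary.conjStarAlgAut_apply]
    simp [U]
  have hAB : A + B = U * (diagonal hB.eigenvalues + star U * A * U) * star U := by
    conv_lhs => rw [hB']
    rw [Matrix.mul_add, Matrix.add_mul, add_comm]
    congr 1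
    rw [← mul_assoc, ← mul_assoc, hU, one_mul, mul_assoc, hU, mul_one]
  rw [hAB, charpoly_mul_comm, ← mul_assoc,
    Unitary.star_mul_self_of_mem hB.eigenvectorUnitary.prop, one_mul]

theorem esymm_eigenvalues_add (hB : B.IsHermitian) (hAB : (A + B).IsHermitian) (j : ℕ) :
    (univ.val.map hAB.eigenvalues).esymm j = ∑ S ∈ univ.filter (#· ≤ j),
      ((star (hB.eigenvectorUnitary : Matrix ι ι ℝ) * A * hB.eigenvectorUnitary).submatrix
        ((↑) : S → ι) (↑)).det * (Sᶜ.val.map hB.eigenvalues).esymm (j - #S) := by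
  by_cases hj : j ≤ Fintype.card ι
  · refine mul_left_cancel₀ (pow_ne_zero j (by norm_num) : (-1 : ℝ) ^ j ≠ 0) ?_
    rw [← hAB.charpoly_coeff_eq_esymm_eigenvalues hj, hB.charpoly_add_eq,
      charpoly_diagonal_add_coeff _ _ hj]
  · rw [Multiset.esymm_eq_zero_of_card_lt (by simp; omega)]
    refine (sum_eq_zero fun S _ => ?_).symm
    have := S.card_le_univ
    rw [Multiset.esymm_eq_zero_of_card_lt (by simp [card_compl]; omega), mul_zero]

end Matrix.IsHermitian

open Finset in
theorem Matrix.PosSemidef.esymm_eigenvalues_add_mul_le {ι : Type*} [Fintype ι] [DecidableEq ι]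
    {A B : Matrix ι ι ℝ} (hA : A.PosSemidef) (hB : B.IsHermitian)
    (hAB : (A + B).IsHermitian) {l m : ℕ} (hlm : l ≤ m)
    (hBΓ : (univ.val.map hB.eigenvalues).InGardingCone m) :
    (univ.val.map hAB.eigenvalues).esymm l * (univ.val.map hB.eigenvalues).esymm m ≤
      (univ.val.map hAB.eigenvalues).esymm m * (univ.val.map hB.eigenvalues).esymm l := by
  rw [hB.esymm_eigenvalues_add hAB l, hB.esymm_eigenvalues_add hAB m, sum_mul, sum_mul]
  set U : Matrix ι ι ℝ := ↑hB.eigenvectorUnitary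
  set d : Finset ι → ℝ := fun S => ((star U * A * U).submatrix ((↑) : S → ι) (↑)).det
  set ev := univ.val.map hB.eigenvalues
  set μ : Finset ι → Multiset ℝ := fun S => Sᶜ.val.map hB.eigenvalues
  have hd : ∀ S, 0 ≤ d S := fun S => ((hA.conjTranspose_mul_mul_same U).submatrix _).det_nonneg
  have hsplit : ∀ S : Finset ι, μ S + S.val.map hB.eigenvalues = ev := by
    intro S
    rw [← Multiset.map_add]
    change (Sᶜ.disjUnion S disjoint_compl_left).val.map _ = _
    rw [disjUnion_eq_union, union_comm, union_compl]
  have hcone : ∀ S : Finset ι, #S ≤ m → (μ S + S.val.map hB.eigenvalues).InGardingCone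
      (m - #S + Multiset.card (S.val.map hB.eigenvalues)) := by
    intro S hS
    rwa [hsplit, Multiset.card_map, card_val, Nat.sub_add_cancel hS]
  calc _ ≤ ∑ S ∈ univ.filter (#· ≤ l), d S * (μ S).esymm (m - #S) * ev.esymm l := by
        refine sum_le_sum fun S hS => ?_
        have hSl : #S ≤ l := (mem_filter.mp hS).2
        have h := (hcone S (hSl.trans hlm)).esymm_mul_esymm_add_le (p := l - #S) (by omega)
        rw [hsplit, Multiset.card_map, card_val, Nat.sub_add_cancel hSl,
          Nat.sub_add_cancel (hSl.trans hlm)] at h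
        linarith [mul_le_mul_of_nonneg_left h (hd S)]
    _ ≤ _ := by
        refine sum_le_sum_of_subset_of_nonneg
          (fun S hS => mem_filter.mpr ⟨mem_univ S, (mem_filter.mp hS).2.trans hlm⟩) ?_
        intro S hS _
        exact mul_nonneg (mul_nonneg (hd S) ((hcone S (mem_filter.mp hS).2).of_add _ le_rfl).le)
          (hBΓ l hlm).le

theorem esymmVec_eq_esymm (n j : ℕ) (lam : Fin n → ℝ) :
    esymmVec n j lam = (Finset.univ.val.map lam).esymm j :=
  (Finset.esymm_map_val lam _ j).symm

theorem inGamma_iff_inGardingCone (n m : ℕ) (lam : Fin n → ℝ) :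
    inGamma n m lam ↔ (Finset.univ.val.map lam).InGardingCone m := by
  refine ⟨fun h j hj => ?_, fun h j _ hj => (esymmVec_eq_esymm n j lam).symm ▸ h j hj⟩
  rcases Nat.eq_zero_or_pos j with rfl | hj₀
  · simp [Multiset.esymm_zero]
  · simpa [esymmVec_eq_esymm] using h j hj₀ hj

theorem stmt_1_general (n k l : ℕ) (hl : l < k - 1)
    (A B : Matrix (Fin n) (Fin n) ℝ) (hA : A.IsHermitian) (hB : B.IsHermitian)
    (hApsd : A.PosSemidef)
    (hBG : inGamma n (k - 1) hB.eigenvalues)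
    (hABG : inGamma n (k - 1) (hA.add hB).eigenvalues) :
    (esymmVec n (k - 1) (hA.add hB).eigenvalues / esymmVec n l (hA.add hB).eigenvalues) ^
        ((1 : ℝ) / ((k - 1 - l : ℕ) : ℝ)) ≥
      (esymmVec n (k - 1) hB.eigenvalues / esymmVec n l hB.eigenvalues) ^
        ((1 : ℝ) / ((k - 1 - l : ℕ) : ℝ)) := by
  rw [inGamma_iff_inGardingCone] at hBG hABG
  simp only [esymmVec_eq_esymm]
  have key := hApsd.esymm_eigenvalues_add_mul_le hB (hA.add hB) hl.le hBG
  have hBl := hBG l hl.le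
  have hABl := hABG l hl.le
  refine Real.rpow_le_rpow (div_nonneg (hBG _ le_rfl).le hBl.le) ?_ (by positivity)
  rw [div_le_div_iff₀ hBl hABl]
  linarith

/-- Lemma (A+B), part (1), second inequality: if `A` is positive semidefinite,
`B ∈ Γ_{k-1}` and `A + B ∈ Γ_{k-1}`, then for `0 ≤ l < k-1`,
`(σ_{k-1}/σ_l)^{1/(k-1-l)}(A+B) ≥ (σ_{k-1}/σ_l)^{1/(k-1-l)}(B)`. -/
theorem stmt_1 (n k l : ℕ) (hn : 2 ≤ n) (hl : l < k - 1) (hkn : k ≤ n)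
    (A B : Matrix (Fin n) (Fin n) ℝ) (hA : A.IsHermitian) (hB : B.IsHermitian)
    (hApsd : A.PosSemidef)
    (hBG : inGamma n (k - 1) hB.eigenvalues)
    (hABG : inGamma n (k - 1) (hA.add hB).eigenvalues) :
    (esymmVec n (k - 1) (hA.add hB).eigenvalues / esymmVec n l (hA.add hB).eigenvalues) ^
        ((1 : ℝ) / ((k - 1 - l : ℕ) : ℝ)) ≥
      (esymmVec n (k - 1) hB.eigenvalues / esymmVec n l hB.eigenvalues) ^
        ((1 : ℝ) / ((k - 1 - l : ℕ) : ℝ)) :=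
  stmt_1_general n k l hl A B hA hB hApsd hBG hABG
end

section
/- Let s_1 < s_2 be real numbers. Then there exist constants c_1, c_2 and p, depending only on s_1 and s_2, such that the function γ(s) = c_1 (c_2 + s)^p is well defined (i.e. c_2 + s > 0) for all s ∈ (s_1, s_2) and satisfies γ′(s) > 0 and γ″(s) − (γ′(s))^2 > γ′(s) for every s ∈ (s_1, s_2). -/
/-!
With `x = c₂ + s` and `γ = c₁ x^p` one has `γ'' = γ' (p - 1) / x`, so the inequality
`γ'' - γ'² > γ'` amounts to `γ' + 1 < (p - 1) / x`. Shifting so that `x ∈ (1, L)` with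
`L = s₂ - s₁ + 1`, the choice `p = 2L + 1` makes `(p - 1) / x > 2`, and
`c₁ = 1 / (p L^(p-1))` makes `γ' = (x / L)^(p-1) ∈ (0, 1)`.
-/

open Real

section PowerFunction

variable (c₁ c₂ p : ℝ) {s : ℝ}

theorem hasDerivAt_const_mul_add_rpow (hs : 0 < c₂ + s) :
    HasDerivAt (fun t : ℝ => c₁ * (c₂ + t) ^ p) (c₁ * p * (c₂ + s) ^ (p - 1)) s := by
  simpa [mul_assoc] using
    (((hasDerivAt_id s).const_add c₂).rpow_const (p := p) (Or.inl hs.ne')).const_mul c₁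

theorem deriv_const_mul_add_rpow (hs : 0 < c₂ + s) :
    deriv (fun t : ℝ => c₁ * (c₂ + t) ^ p) s = c₁ * p * (c₂ + s) ^ (p - 1) :=
  (hasDerivAt_const_mul_add_rpow c₁ c₂ p hs).deriv

theorem deriv_deriv_const_mul_add_rpow (hs : 0 < c₂ + s) :
    deriv (deriv fun t : ℝ => c₁ * (c₂ + t) ^ p) s = c₁ * p * (p - 1) * (c₂ + s) ^ (p - 2) := by
  have hderiv : deriv (fun t : ℝ => c₁ * (c₂ + t) ^ p)
      =ᶠ[nhds s] fun t => c₁ * p * (c₂ + t) ^ (p - 1) := by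
    filter_upwards [(isOpen_lt continuous_const (continuous_const_add c₂)).mem_nhds hs]
      with t ht using deriv_const_mul_add_rpow c₁ c₂ p ht
  rw [hderiv.deriv_eq, deriv_const_mul_add_rpow (c₁ * p) c₂ (p - 1) hs]
  ring_nf

theorem sq_deriv_add_deriv_lt_deriv_deriv_const_mul_add_rpow (hs : 0 < c₂ + s)
    (hpos : 0 < c₁ * p * (c₂ + s) ^ (p - 1))
    (hgap : c₁ * p * (c₂ + s) ^ (p - 1) + 1 < (p - 1) / (c₂ + s)) :
    deriv (fun t : ℝ => c₁ * (c₂ + t) ^ p) s ^ 2 + deriv (fun t : ℝ => c₁ * (c₂ + t) ^ p) s <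
      deriv (deriv fun t : ℝ => c₁ * (c₂ + t) ^ p) s := by
  have hsecond : c₁ * p * (p - 1) * (c₂ + s) ^ (p - 2) =
      c₁ * p * (c₂ + s) ^ (p - 1) * ((p - 1) / (c₂ + s)) := by
    rw [show p - 2 = p - 1 - 1 by ring, rpow_sub_one hs.ne']
    ring
  rw [deriv_const_mul_add_rpow c₁ c₂ p hs, deriv_deriv_const_mul_add_rpow c₁ c₂ p hs, hsecond]
  nlinarith [mul_lt_mul_of_pos_left hgap hpos]

end PowerFunction

theorem stmt_6_general (s₁ s₂ : ℝ) :
    ∃ c₁ c₂ p : ℝ, ∀ s ∈ Set.Ioo s₁ s₂,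
      0 < c₂ + s ∧
      0 < deriv (fun t : ℝ => c₁ * (c₂ + t) ^ p) s ∧
      deriv (deriv (fun t : ℝ => c₁ * (c₂ + t) ^ p)) s -
          (deriv (fun t : ℝ => c₁ * (c₂ + t) ^ p) s) ^ 2 >
        deriv (fun t : ℝ => c₁ * (c₂ + t) ^ p) s := by
  set L := s₂ - s₁ + 1
  set p := 2 * L + 1
  refine ⟨1 / (p * L ^ (p - 1)), 1 - s₁, p, fun s ⟨hs₁, hs₂⟩ => ?_⟩
  have hx : 0 < 1 - s₁ + s := by linarith
  have hL : 0 < L := by linarith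
  have hp : 0 < p := by positivity
  have hγ' : 1 / (p * L ^ (p - 1)) * p * (1 - s₁ + s) ^ (p - 1) =
      ((1 - s₁ + s) / L) ^ (p - 1) := by
    rw [div_rpow hx.le hL.le]
    field_simp [hp.ne']
  have hγ'_pos : 0 < ((1 - s₁ + s) / L) ^ (p - 1) := by positivity
  have hγ'_lt_one : ((1 - s₁ + s) / L) ^ (p - 1) < 1 :=
    rpow_lt_one (by positivity) ((div_lt_one hL).2 (by linarith)) (by linarith)
  have htwo_lt : 2 < (p - 1) / (1 - s₁ + s) := by
    rw [lt_div_iff₀ hx]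
    linarith
  have hineq := sq_deriv_add_deriv_lt_deriv_deriv_const_mul_add_rpow _ _ p hx
    (by rwa [hγ']) (by rw [hγ']; linarith)
  rw [deriv_const_mul_add_rpow _ _ _ hx, hγ'] at hineq ⊢
  exact ⟨hx, hγ'_pos, by linarith⟩

/-- Lemma (Gursky–Viaclovsky): given `s₁ < s₂`, there are constants `c₁, c₂, p`
(depending only on `s₁, s₂`) such that `γ(s) = c₁ (c₂ + s)^p` is well defined
(`c₂ + s > 0`) on `(s₁, s₂)` and satisfies `γ'(s) > 0` and `γ''(s) - γ'(s)² > γ'(s)`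
for every `s ∈ (s₁, s₂)`. -/
theorem stmt_6 (s₁ s₂ : ℝ) (h : s₁ < s₂) :
    ∃ c₁ c₂ p : ℝ, ∀ s ∈ Set.Ioo s₁ s₂,
      0 < c₂ + s ∧
      0 < deriv (fun t : ℝ => c₁ * (c₂ + t) ^ p) s ∧
      deriv (deriv (fun t : ℝ => c₁ * (c₂ + t) ^ p)) s -
          (deriv (fun t : ℝ => c₁ * (c₂ + t) ^ p) s) ^ 2 >
        deriv (fun t : ℝ => c₁ * (c₂ + t) ^ p) s :=
  stmt_6_general s₁ s₂
end

section
/- Let n ≥ 2, 2 ≤ k ≤ n and 0 ≤ l ≤ k-2. Let λ ∈ Γ_{k-1} with σ_k(λ) > 0. Then σ_l(λ)/σ_{k-1}(λ) ≤ [ (C(n,k))^{k-1-l} · C(n,l) / (C(n,k-1))^{k-l} ] · (σ_{k-1}(λ)/σ_k(λ))^{k-1-l}, where C(n,j) denotes the binomial coefficient n choose j. -/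
namespace Polynomial

theorem Splits.reverse {K : Type*} [Field K] {p : K[X]} (hp : p.Splits) :
    p.reverse.Splits := by
  induction hp using Submonoid.closure_induction with
  | mem f hf =>
    rcases hf with ⟨a, rfl⟩ | ⟨a, rfl⟩
    · rw [reverse_C]; exact .C a
    · exact .of_natDegree_le_one ((reverse_natDegree_le _).trans (natDegree_X_add_C a).le)
  | one => rw [← C_1, reverse_C]; exact .C 1
  | mul f g _ _ hf hg => rw [reverse_mul_of_domain]; exact hf.mul hg

theorem Splits.reflect {K : Type*} [Field K] {p : K[X]} (hp : p.Splits)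
    {N : ℕ} (hN : p.natDegree ≤ N) : (p.reflect N).Splits := by
  have h := reflect_mul p 1 le_rfl (natDegree_one.trans_le (Nat.zero_le (N - p.natDegree)))
  rw [Nat.add_sub_cancel' hN, mul_one] at h
  rw [h, reflect_one]
  exact hp.reverse.mul (.X_pow _)

theorem Splits.derivative {p : ℝ[X]} (hp : p.Splits) : p.derivative.Splits := by
  rcases eq_or_ne p.derivative 0 with h | h
  · rw [h]; exact .zero
  have hdeg : p.natDegree ≠ 0 := fun h0 => h (derivative_of_natDegree_zero h0)
  have := natDegree_eq_of_degree_eq_some (degree_derivative hdeg)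
  rw [splits_iff_card_roots] at hp ⊢
  have := card_roots_le_derivative p
  have := card_roots' p.derivative
  omega

theorem Splits.iterate_derivative {p : ℝ[X]} (hp : p.Splits) (k : ℕ) :
    (Polynomial.derivative^[k] p).Splits := by
  induction k with
  | zero => exact hp
  | succ k ih => rw [Function.iterate_succ_apply']; exact ih.derivative

theorem Splits.discrim_nonneg {K : Type*} [Field K] [LinearOrder K] [IsStrictOrderedRing K]
    {p : K[X]} (hp : p.Splits) (hdeg : p.natDegree ≤ 2) :
    0 ≤ discrim (p.coeff 2) (p.coeff 1) (p.coeff 0) := by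
  by_cases h0 : p.degree = 0
  · rw [coeff_eq_zero_of_degree_lt (by rw [h0]; norm_num), discrim]
    nlinarith [sq_nonneg (p.coeff 1)]
  obtain ⟨x, hx⟩ := hp.exists_eval_eq_zero h0
  rw [eval_eq_sum_range' (Nat.lt_succ_of_le hdeg)] at hx
  simp only [Finset.sum_range_succ, Finset.sum_range_zero] at hx
  rw [discrim_eq_sq_of_quadratic_eq_zero (x := x) (by linear_combination hx)]
  exact sq_nonneg _

theorem coeff_iterate_derivative_reflect_iterate_derivative {R : Type*} [CommSemiring R]
    (p : R[X]) {a b N v : ℕ} (h : v + a ≤ N) :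
    (derivative^[a] ((derivative^[b] p).reflect N)).coeff v =
      ((v + a).descFactorial a * (N - (v + a) + b).descFactorial b) •
        p.coeff (N - (v + a) + b) := by
  rw [coeff_iterate_derivative, coeff_reflect, revAt_le h, coeff_iterate_derivative, smul_smul]

end Polynomial

open Nat in
theorem Nat.descFactorial_mul_descFactorial_mul_choose {n j a b : ℕ} (hj : j ≤ n) (ha : a ≤ j)
    (hb : b ≤ n - j) :
    j.descFactorial a * (n - j).descFactorial b * n.choose j * ((j - a)! * (n - j - b)!) = n ! :=
  calc _ = n.choose j * ((j - a)! * j.descFactorial a) *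
        ((n - j - b)! * (n - j).descFactorial b) := by ring
    _ = n ! := by
      rw [Nat.factorial_mul_descFactorial ha, Nat.factorial_mul_descFactorial hb,
        Nat.choose_mul_factorial_mul_factorial hj]

open Polynomial

theorem esymmVec_zero (n : ℕ) (lam : Fin n → ℝ) : esymmVec n 0 lam = 1 := by
  simp [esymmVec]

theorem coeff_prod_X_add_C_eq_esymmVec {n s : ℕ} (lam : Fin n → ℝ) (hs : s ≤ n) :
    (∏ i, (X + C (lam i))).coeff (n - s) = esymmVec n s lam := by
  rw [Finset.prod_X_add_C_coeff _ _ (by simp), Finset.card_univ, Fintype.card_fin,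
    Nat.sub_sub_self hs]
  rfl

noncomputable def esymmMean (n j : ℕ) (lam : Fin n → ℝ) : ℝ :=
  esymmVec n j lam / n.choose j

noncomputable def newtonQuadratic (n m : ℕ) (lam : Fin n → ℝ) : ℝ[X] :=
  derivative^[m] ((derivative^[n - m - 2] (∏ i, (X + C (lam i)))).reflect (m + 2))

section NewtonQuadratic

variable {n m : ℕ} (lam : Fin n → ℝ)

theorem natDegree_iterate_derivative_prod_X_add_C_le :
    (derivative^[n - m - 2] (∏ i, (X + C (lam i)))).natDegree ≤ m + 2 :=
  (natDegree_iterate_derivative _ _).trans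
    (Nat.sub_le_of_le_add ((natDegree_prod_le _ _).trans (by simp; omega)))

theorem newtonQuadratic_splits : (newtonQuadratic n m lam).Splits :=
  (((Splits.prod fun i _ => Splits.X_add_C (lam i)).iterate_derivative _).reflect
    (natDegree_iterate_derivative_prod_X_add_C_le lam)).iterate_derivative m

theorem natDegree_newtonQuadratic_le : (newtonQuadratic n m lam).natDegree ≤ 2 :=
  (natDegree_iterate_derivative _ _).trans <| Nat.sub_le_of_le_add <|
    natDegree_reflect_le.trans <|
      max_le (by omega) ((natDegree_iterate_derivative_prod_X_add_C_le lam).trans (by omega))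

open Nat in
theorem coeff_newtonQuadratic_mul (hmn : m + 2 ≤ n) {v : ℕ} (hv : v ≤ 2) :
    (newtonQuadratic n m lam).coeff v * (v ! * (2 - v)! : ℕ) = n ! * esymmMean n (m + v) lam := by
  have hnat := Nat.descFactorial_mul_descFactorial_mul_choose (n := n) (j := m + v) (a := m)
    (b := n - m - 2) (by omega) (by omega) (by omega)
  rw [show m + v - m = v by omega, show n - (m + v) - (n - m - 2) = 2 - v by omega] at hnat
  have hC : (0 : ℝ) < n.choose (m + v) := by exact_mod_cast Nat.choose_pos (by omega)
  rw [newtonQuadratic, coeff_iterate_derivative_reflect_iterate_derivative _ (by omega),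
    show m + 2 - (v + m) + (n - m - 2) = n - (m + v) by omega,
    coeff_prod_X_add_C_eq_esymmVec _ (by omega), esymmMean, ← hnat, add_comm v m, nsmul_eq_mul]
  field_simp
  push_cast
  ring

open Nat in
theorem esymmMean_mul_esymmMean_le_sq (hmn : m + 2 ≤ n) :
    esymmMean n m lam * esymmMean n (m + 2) lam ≤ esymmMean n (m + 1) lam ^ 2 := by
  set Q := newtonQuadratic n m lam
  have h0 := coeff_newtonQuadratic_mul lam hmn (v := 0) (by norm_num)
  have h1 := coeff_newtonQuadratic_mul lam hmn (v := 1) (by norm_num)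
  have h2 := coeff_newtonQuadratic_mul lam hmn (v := 2) (by norm_num)
  simp only [Nat.sub_zero, Nat.reduceSub, Nat.sub_self, Nat.add_zero, factorial_zero,
    factorial_one, factorial_two, Nat.one_mul, Nat.cast_ofNat, Nat.cast_one, mul_one] at h0 h1 h2
  have hdisc : discrim (Q.coeff 2) (Q.coeff 1) (Q.coeff 0) = n ! ^ 2 *
      (esymmMean n (m + 1) lam ^ 2 - esymmMean n m lam * esymmMean n (m + 2) lam) := by
    rw [discrim]
    linear_combination (Q.coeff 1 + n ! * esymmMean n (m + 1) lam) * h1 - 2 * Q.coeff 0 * h2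
      - n ! * esymmMean n (m + 2) lam * h0
  have hpos := (newtonQuadratic_splits (m := m) lam).discrim_nonneg
    (natDegree_newtonQuadratic_le lam)
  rw [hdisc] at hpos
  exact sub_nonneg.mp (nonneg_of_mul_nonneg_right hpos (by positivity))

end NewtonQuadratic

section LogConcave

variable {p : ℕ → ℝ}

theorem div_le_div_succ_of_mul_le_sq {j : ℕ} (h1 : 0 < p (j + 1)) (h2 : 0 < p (j + 2))
    (hconc : p j * p (j + 2) ≤ p (j + 1) ^ 2) : p j / p (j + 1) ≤ p (j + 1) / p (j + 2) := by
  rw [div_le_div_iff₀ h1 h2]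
  linarith

theorem monotoneOn_div_succ_of_mul_le_sq {t : ℕ} (hpos : ∀ j ≤ t + 1, 0 < p j)
    (hconc : ∀ j, j + 2 ≤ t + 1 → p j * p (j + 2) ≤ p (j + 1) ^ 2) :
    MonotoneOn (fun j => p j / p (j + 1)) (Set.Iic t) :=
  monotoneOn_of_le_succ Set.ordConnected_Iic fun j _ _ (hj : j + 1 ≤ t) =>
    div_le_div_succ_of_mul_le_sq (hpos _ (by omega)) (hpos _ (by omega)) (hconc j (by omega))

theorem div_le_div_succ_pow_of_mul_le_sq {l d : ℕ} (hpos : ∀ j ≤ l + d + 1, 0 < p j)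
    (hconc : ∀ j, j + 2 ≤ l + d + 1 → p j * p (j + 2) ≤ p (j + 1) ^ 2) :
    p l / p (l + d) ≤ (p (l + d) / p (l + d + 1)) ^ d := by
  induction d generalizing l with
  | zero => simp [div_self (hpos l (by omega)).ne']
  | succ d ih =>
    have hshift : l + 1 + d = l + (d + 1) := by omega
    have htail := ih (l := l + 1) (fun j hj => hpos j (by omega)) (fun j hj => hconc j (by omega))
    rw [hshift] at htail
    have hhead : p l / p (l + 1) ≤ p (l + (d + 1)) / p (l + (d + 1) + 1) :=
      monotoneOn_div_succ_of_mul_le_sq hpos hconc (by simp) (by simp) (by omega)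
    calc p l / p (l + (d + 1)) = p l / p (l + 1) * (p (l + 1) / p (l + (d + 1))) := by
          rw [div_mul_div_cancel₀ (hpos (l + 1) (by omega)).ne']
      _ ≤ p (l + (d + 1)) / p (l + (d + 1) + 1) * (p (l + (d + 1)) / p (l + (d + 1) + 1)) ^ d :=
          mul_le_mul hhead htail (div_pos (hpos _ (by omega)) (hpos _ (by omega))).le
            (div_pos (hpos _ (by omega)) (hpos _ (by omega))).le
      _ = _ := (pow_succ' _ _).symm

end LogConcave

theorem esymmVec_pos_of_inGamma {n m j : ℕ} {lam : Fin n → ℝ} (hG : inGamma n m lam)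
    (hm : 0 < esymmVec n (m + 1) lam) (hj : j ≤ m + 1) : 0 < esymmVec n j lam := by
  rcases Nat.eq_zero_or_pos j with rfl | hj0
  · simp [esymmVec_zero]
  rcases hj.lt_or_eq with hjm | rfl
  · exact hG j hj0 (by omega)
  · exact hm

theorem esymmMean_div_esymmMean_le_pow {n l d : ℕ} {lam : Fin n → ℝ} (hn : l + d + 1 ≤ n)
    (hG : inGamma n (l + d) lam) (hσ : 0 < esymmVec n (l + d + 1) lam) :
    esymmMean n l lam / esymmMean n (l + d) lam ≤
      (esymmMean n (l + d) lam / esymmMean n (l + d + 1) lam) ^ d :=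
  div_le_div_succ_pow_of_mul_le_sq
    (fun j hj => div_pos (esymmVec_pos_of_inGamma hG hσ hj)
      (by exact_mod_cast Nat.choose_pos (hj.trans hn)))
    fun _ _ => esymmMean_mul_esymmMean_le_sq lam (by omega)

theorem stmt_7_general (n k l : ℕ) (hk2 : 2 ≤ k) (hkn : k ≤ n) (hl : l ≤ k - 2)
    (lam : Fin n → ℝ) (hG : inGamma n (k - 1) lam) (hσk : 0 < esymmVec n k lam) :
    esymmVec n l lam / esymmVec n (k - 1) lam ≤
      ((n.choose k : ℝ) ^ (k - 1 - l) * (n.choose l : ℝ) / (n.choose (k - 1) : ℝ) ^ (k - l)) *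
        (esymmVec n (k - 1) lam / esymmVec n k lam) ^ (k - 1 - l) := by
  obtain ⟨d, rfl⟩ : ∃ d, k = l + d + 1 := ⟨k - 1 - l, by omega⟩
  simp only [Nat.add_sub_cancel] at hG ⊢
  rw [Nat.add_sub_cancel_left, show l + d + 1 - l = d + 1 by omega]
  have hmean := esymmMean_div_esymmMean_le_pow hkn hG hσk
  simp only [esymmMean] at hmean
  have hc : ∀ j ≤ l + d + 1, (0 : ℝ) < n.choose j := fun j hj => by
    exact_mod_cast Nat.choose_pos (hj.trans hkn)
  set σ := fun j => esymmVec n j lam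
  set c := fun j => (n.choose j : ℝ)
  have : 0 < c l := hc l (by omega)
  have : 0 < c (l + d) := hc (l + d) (by omega)
  have : 0 < c (l + d + 1) := hc (l + d + 1) le_rfl
  have : 0 < σ (l + d) := esymmVec_pos_of_inGamma hG hσk (by omega)
  have : 0 < σ (l + d + 1) := hσk
  calc σ l / σ (l + d) = c l / c (l + d) * (σ l / c l / (σ (l + d) / c (l + d))) := by
        field_simp
    _ ≤ c l / c (l + d) * (σ (l + d) / c (l + d) / (σ (l + d + 1) / c (l + d + 1))) ^ d := by
        gcongr
    _ = c (l + d + 1) ^ d * c l / c (l + d) ^ (d + 1) * (σ (l + d) / σ (l + d + 1)) ^ d := by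
        rw [show σ (l + d) / c (l + d) / (σ (l + d + 1) / c (l + d + 1)) =
            c (l + d + 1) / c (l + d) * (σ (l + d) / σ (l + d + 1)) by field_simp,
          mul_pow, div_pow, pow_succ]
        field_simp

/-- Newton–MacLaurin-type estimate: for `λ ∈ Γ_{k-1}` with `σ_k(λ) > 0` and
`0 ≤ l ≤ k-2`,
`σ_l/σ_{k-1} ≤ (C(n,k))^{k-1-l} C(n,l) / (C(n,k-1))^{k-l} · (σ_{k-1}/σ_k)^{k-1-l}`. -/
theorem stmt_7 (n k l : ℕ) (hn : 2 ≤ n) (hk2 : 2 ≤ k) (hkn : k ≤ n) (hl : l ≤ k - 2)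
    (lam : Fin n → ℝ) (hG : inGamma n (k - 1) lam) (hσk : 0 < esymmVec n k lam) :
    esymmVec n l lam / esymmVec n (k - 1) lam ≤
      ((n.choose k : ℝ) ^ (k - 1 - l) * (n.choose l : ℝ) / (n.choose (k - 1) : ℝ) ^ (k - l)) *
        (esymmVec n (k - 1) lam / esymmVec n k lam) ^ (k - 1 - l) :=
  stmt_7_general n k l hk2 hkn hl lam hG hσk
end
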